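/- Consider the Round-Robin allocation algorithm with n agents and m = kn goods, where agents pick in fixed cyclic order and each agent's reported ranking is a strict total order consistent with her singleton values (i.e., g ≻_i g' implies v_i({g}) ≥ v_i({g'})). If all agents' valuation functions are non-decreasing and cancelable, then the resulting allocation (A_1,…,A_n) is EF1: for every pair of agents i, j there exists g ∈ A_j with v_i(A_i) ≥ v_i(A_j \ {g}). -/

import Mathlib

/-! Round-Robin mechanism: given reported strict total orders (duplicate-free lists
ranking the goods), in turns `t = 0, 1, 2, …` agent `t % n` receives her reported-top
good among those not yet allocated. -/

variable {G : Type*} [DecidableEq G]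

/-- Goods remaining after `t` turns of the Round-Robin mechanism. -/
def rrRemaining {n : ℕ} (hn : 0 < n) (pref : Fin n → List G) (goods : Finset G) :
    ℕ → Finset G
  | 0 => goods
  | t + 1 =>
    let S := rrRemaining hn pref goods t
    match (pref ⟨t % n, Nat.mod_lt t hn⟩).find? (fun g => decide (g ∈ S)) with
    | none => S
    | some g => S.erase g

/-- The good picked at turn `t` (agent `t % n` picks her reported-top available good). -/
def rrPicked {n : ℕ} (hn : 0 < n) (pref : Fin n → List G) (goods : Finset G) (t : ℕ) :
    Option G :=
  (pref ⟨t % n, Nat.mod_lt t hn⟩).find? fun g => decide (g ∈ rrRemaining hn pref goods t)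

/-- The bundle allocated to agent `i` by Round-Robin. -/
def rrBundle {n : ℕ} (hn : 0 < n) (pref : Fin n → List G) (goods : Finset G) (i : Fin n) :
    Finset G :=
  ((Finset.range goods.card).filter fun t => t % n = i.val).biUnion fun t =>
    (rrPicked hn pref goods t).toFinset

/-- Goods allocated strictly before turn `t`. -/
def rrAllocatedBefore {n : ℕ} (hn : 0 < n) (pref : Fin n → List G) (goods : Finset G)
    (t : ℕ) : Finset G := goods \ rrRemaining hn pref goods t

/-- A valid report is a strict total order on the goods: a duplicate-free list
enumerating exactly the goods. -/
def ValidReport (goods : Finset G) (l : List G) : Prop :=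
  l.Nodup ∧ ∀ g, g ∈ l ↔ g ∈ goods

/-- A valuation `v` is *cancelable* if `v (S ∪ {g}) > v (T ∪ {g})` implies `v S > v T`
for every `g ∉ S ∪ T`. -/
def Cancelable (v : Finset G → ℝ) : Prop :=
  ∀ S T : Finset G, ∀ g, g ∉ S ∪ T → v (insert g S) > v (insert g T) → v S > v T


section RR

variable {n : ℕ} (hn : 0 < n) (pref : Fin n → List G) (goods : Finset G)

lemma rrRemaining_succ (t : ℕ) :
    rrRemaining hn pref goods (t + 1) =
      match rrPicked hn pref goods t with
      | none => rrRemaining hn pref goods t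
      | some g => (rrRemaining hn pref goods t).erase g := rfl

lemma rrRemaining_subset_goods : ∀ t, rrRemaining hn pref goods t ⊆ goods
  | 0 => subset_rfl
  | t + 1 => by
    rw [rrRemaining_succ]
    cases h : rrPicked hn pref goods t with
    | none => exact rrRemaining_subset_goods t
    | some g => exact (Finset.erase_subset _ _).trans (rrRemaining_subset_goods t)

lemma rrRemaining_succ_subset (t : ℕ) :
    rrRemaining hn pref goods (t + 1) ⊆ rrRemaining hn pref goods t := by
  rw [rrRemaining_succ]
  cases h : rrPicked hn pref goods t with
  | none => exact subset_rfl
  | some g => exact Finset.erase_subset _ _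

lemma rrRemaining_antitone {s t : ℕ} (h : s ≤ t) :
    rrRemaining hn pref goods t ⊆ rrRemaining hn pref goods s := by
  induction t with
  | zero => simp_all
  | succ t ih =>
    rcases Nat.lt_or_ge s (t+1) with hlt | hge
    · exact (rrRemaining_succ_subset hn pref goods t).trans (ih (Nat.lt_succ_iff.mp hlt))
    · have : s = t + 1 := le_antisymm h hge
      subst this; exact subset_rfl

lemma rrPicked_mem {t : ℕ} {g : G} (h : rrPicked hn pref goods t = some g) :
    g ∈ rrRemaining hn pref goods t := by
  have := List.find?_some h
  simpa using this

lemma rrRemaining_succ_of_picked {t : ℕ} {g : G} (h : rrPicked hn pref goods t = some g) :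
    rrRemaining hn pref goods (t + 1) = (rrRemaining hn pref goods t).erase g := by
  rw [rrRemaining_succ, h]

lemma rrPicked_isSome (hvalid : ∀ i, ValidReport goods (pref i)) {t : ℕ}
    (h : (rrRemaining hn pref goods t).Nonempty) : ∃ g, rrPicked hn pref goods t = some g := by
  obtain ⟨g, hg⟩ := h
  have hmem : g ∈ pref ⟨t % n, Nat.mod_lt t hn⟩ :=
    ((hvalid _).2 g).mpr (rrRemaining_subset_goods hn pref goods t hg)
  rw [rrPicked]
  rw [← Option.isSome_iff_exists, List.find?_isSome]
  exact ⟨g, hmem, by simpa using hg⟩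

lemma rrRemaining_card (hvalid : ∀ i, ValidReport goods (pref i)) :
    ∀ t, t ≤ goods.card → (rrRemaining hn pref goods t).card = goods.card - t
  | 0, _ => rfl
  | t + 1, ht => by
    have ih := rrRemaining_card hvalid t (Nat.le_of_succ_le ht)
    have hne : (rrRemaining hn pref goods t).Nonempty := by
      rw [← Finset.card_pos, ih]; omega
    obtain ⟨g, hg⟩ := rrPicked_isSome hn pref goods hvalid hne
    rw [rrRemaining_succ_of_picked hn pref goods hg,
      Finset.card_erase_of_mem (rrPicked_mem hn pref goods hg), ih]
    omega

lemma rrPicked_of_lt (hvalid : ∀ i, ValidReport goods (pref i)) {t : ℕ}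
    (ht : t < goods.card) : ∃ g, rrPicked hn pref goods t = some g := by
  apply rrPicked_isSome hn pref goods hvalid
  rw [← Finset.card_pos, rrRemaining_card hn pref goods hvalid t ht.le]
  omega


lemma find?_rel {α : Type*} {R : α → α → Prop} (hrefl : ∀ a, R a a) :
    ∀ {l : List α}, l.Pairwise R → ∀ {p : α → Bool} {g : α}, l.find? p = some g →
      ∀ {g' : α}, g' ∈ l → p g' = true → R g g'
  | [], _, _, _, h, _, hg', _ => by simp at h
  | a :: l, hpw, p, g, h, g', hg', hpg' => by
    rw [List.pairwise_cons] at hpw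
    by_cases hpa : p a
    · rw [List.find?_cons_of_pos hpa] at h
      obtain rfl : a = g := by injection h
      rcases List.mem_cons.mp hg' with rfl | hg'
      · exact hrefl _
      · exact hpw.1 _ hg'
    · rw [List.find?_cons_of_neg hpa] at h
      rcases List.mem_cons.mp hg' with rfl | hg'
      · exact absurd hpg' (by simpa using hpa)
      · exact find?_rel hrefl hpw.2 h hg' hpg'

variable {n : ℕ} (hn : 0 < n) (pref : Fin n → List G) (goods : Finset G)

lemma rrPicked_best (v : Fin n → Finset G → ℝ)
    (hvalid : ∀ i, ValidReport goods (pref i))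
    (hcons : ∀ i, (pref i).Pairwise fun a b => v i {b} ≤ v i {a})
    {t : ℕ} {g g' : G} (h : rrPicked hn pref goods t = some g)
    (hg' : g' ∈ rrRemaining hn pref goods t) :
    v ⟨t % n, Nat.mod_lt t hn⟩ {g'} ≤ v ⟨t % n, Nat.mod_lt t hn⟩ {g} := by
  have hmem : g' ∈ pref ⟨t % n, Nat.mod_lt t hn⟩ :=
    ((hvalid _).2 g').mpr (rrRemaining_subset_goods hn pref goods t hg')
  exact find?_rel (R := fun a b => v ⟨t % n, Nat.mod_lt t hn⟩ {b} ≤ v ⟨t % n, Nat.mod_lt t hn⟩ {a}) (fun a => le_refl _) (hcons _) h hmem (by simpa using hg')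

lemma rrPicked_ne {s t : ℕ} (hst : s < t) {g g' : G}
    (hs : rrPicked hn pref goods s = some g) (ht : rrPicked hn pref goods t = some g') :
    g' ≠ g := by
  have h1 : g' ∈ rrRemaining hn pref goods t := rrPicked_mem hn pref goods ht
  have h2 : rrRemaining hn pref goods t ⊆ (rrRemaining hn pref goods s).erase g := by
    rw [← rrRemaining_succ_of_picked hn pref goods hs]
    exact rrRemaining_antitone hn pref goods hst
  exact Finset.ne_of_mem_erase (h2 h1)

section Canc

variable {v : Finset G → ℝ}

lemma canc_insert_le (hc : Cancelable v) {S T : Finset G} {g : G}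
    (hgS : g ∉ S) (hgT : g ∉ T) (h : v S ≤ v T) :
    v (insert g S) ≤ v (insert g T) := by
  by_contra hlt
  push_neg at hlt
  exact absurd (hc S T g (by simp [hgS, hgT]) hlt) (not_lt.mpr h)

lemma canc_singleton_aux (hc : Cancelable v) :
    ∀ m (S : Finset G), S.card = m → ∀ a b, a ∉ S → b ∉ S →
      v (insert b S) > v (insert a S) → v {b} > v {a}
  | 0, S, hcard, a, b, _, _, h => by
    rw [Finset.card_eq_zero.mp hcard] at h
    simpa using h
  | m + 1, S, hcard, a, b, ha, hb, h => by
    have hSne : S.Nonempty := by rw [← Finset.card_pos, hcard]; omega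
    obtain ⟨s, hs⟩ := hSne
    have hsa : s ≠ a := fun e => ha (e ▸ hs)
    have hsb : s ≠ b := fun e => hb (e ▸ hs)
    have hins : ∀ c : G, c ∉ S → insert c S = insert s (insert c (S.erase s)) := by
      intro c hc'
      rw [Finset.insert_comm, Finset.insert_erase hs]
    rw [hins a ha, hins b hb] at h
    have hnot : s ∉ insert b (S.erase s) ∪ insert a (S.erase s) := by
      simp [hsa, hsb]
    have h2 := hc _ _ s hnot h
    exact canc_singleton_aux hc m (S.erase s)
      (by rw [Finset.card_erase_of_mem hs, hcard]; omega) a b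
      (fun h' => ha (Finset.mem_of_mem_erase h'))
      (fun h' => hb (Finset.mem_of_mem_erase h')) h2

lemma canc_swap_le (hc : Cancelable v) {S : Finset G} {a b : G}
    (h : v {b} ≤ v {a}) (ha : a ∉ S) (hb : b ∉ S) :
    v (insert b S) ≤ v (insert a S) := by
  by_contra hlt
  push_neg at hlt
  exact absurd (canc_singleton_aux hc S.card S rfl a b ha hb hlt) (not_lt.mpr h)

lemma canc_pair_step (hc : Cancelable v) {S T : Finset G} {a b : G}
    (h1 : v T ≤ v S) (h2 : v {b} ≤ v {a}) (hbT : b ∉ T) (hbS : b ∉ S) (haS : a ∉ S) :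
    v (insert b T) ≤ v (insert a S) :=
  (canc_insert_le hc hbT hbS h1).trans (canc_swap_le hc h2 haS hbS)

lemma canc_chain (hc : Cancelable v) {k' : ℕ} {f g' : ℕ → G}
    (hf : ∀ r < k', ∀ s < r, f s ≠ f r)
    (hg : ∀ r < k', ∀ s < r, g' s ≠ g' r)
    (hfg : ∀ r < k', ∀ s < r, f s ≠ g' r)
    (hcomp : ∀ r < k', v {g' r} ≤ v {f r}) :
    ∀ r ≤ k', v ((Finset.range r).image g') ≤ v ((Finset.range r).image f)
  | 0, _ => by simp
  | r + 1, hr => by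
    have ih := canc_chain hc hf hg hfg hcomp r (Nat.le_of_succ_le hr)
    have hrk : r < k' := hr
    rw [Finset.range_add_one, Finset.image_insert, Finset.image_insert]
    apply canc_pair_step hc ih (hcomp r hrk)
    · simp only [Finset.mem_image, Finset.mem_range, not_exists]
      rintro s ⟨hs, e⟩
      exact hg r hrk s hs e
    · simp only [Finset.mem_image, Finset.mem_range, not_exists]
      rintro s ⟨hs, e⟩
      exact hfg r hrk s hs e
    · simp only [Finset.mem_image, Finset.mem_range, not_exists]
      rintro s ⟨hs, e⟩
      exact hf r hrk s hs e

end Canc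

lemma mem_rrBundle {i : Fin n} {g : G} :
    g ∈ rrBundle hn pref goods i ↔
      ∃ t, t < goods.card ∧ t % n = i.val ∧ rrPicked hn pref goods t = some g := by
  simp only [rrBundle, Finset.mem_biUnion, Finset.mem_filter, Finset.mem_range,
    Option.mem_toFinset, Option.mem_def]
  tauto


end RR

/-- Round-Robin with `n` agents and `m = k·n` goods, where all agents have non-decreasing
cancelable valuations and each agent reports a strict total order consistent with her
singleton values (earlier-ranked goods have at least the singleton value of later ones),
produces an EF1 allocation: for all agents `i, j` with `A_j ≠ ∅` there is `g ∈ A_j`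
with `v_i(A_i) ≥ v_i(A_j \ {g})`. -/
theorem roundRobin_truthful_EF1 {n k : ℕ} (hn : 0 < n)
    (goods : Finset G) (hm : goods.card = k * n)
    (v : Fin n → Finset G → ℝ)
    (hnn : ∀ i S, 0 ≤ v i S)
    (hmono : ∀ i, ∀ S T : Finset G, S ⊆ T → v i S ≤ v i T)
    (hcanc : ∀ i, Cancelable (v i))
    (pref : Fin n → List G)
    (hvalid : ∀ i, ValidReport goods (pref i))
    (hcons : ∀ i, (pref i).Pairwise fun a b => v i {b} ≤ v i {a})
    (i j : Fin n) (hne : (rrBundle hn pref goods j).Nonempty) :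
    ∃ g ∈ rrBundle hn pref goods j,
      v i (rrBundle hn pref goods i) ≥ v i ((rrBundle hn pref goods j).erase g) := by
  classical
  obtain ⟨g0, hg0⟩ := hne
  have hk : 0 < k := by
    obtain ⟨t, ht, -, -⟩ := (mem_rrBundle hn pref goods).mp hg0
    rw [hm] at ht
    rcases Nat.eq_zero_or_pos k with rfl | h
    · omega
    · exact h
  set pk : ℕ → G := fun t => (rrPicked hn pref goods t).getD g0 with hpk_def
  have hpick : ∀ t < goods.card, rrPicked hn pref goods t = some (pk t) := by
    intro t ht
    obtain ⟨g, hg⟩ := rrPicked_of_lt hn pref goods hvalid ht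
    simp [hpk_def, hg]
  -- arithmetic helpers
  have hmodd : ∀ a r : ℕ, a < n → (a + r * n) % n = a := by
    intro a r ha
    rw [Nat.add_mul_mod_self_right, Nat.mod_eq_of_lt ha]
  have hturn_lt : ∀ a r : ℕ, a < n → r < k → a + r * n < goods.card := by
    intro a r ha hr
    rw [hm]
    have h1 : a + r * n < (r + 1) * n := by rw [add_one_mul]; omega
    have h2 : (r + 1) * n ≤ k * n := Nat.mul_le_mul_right n hr
    omega
  have hturn_key : ∀ a b r s : ℕ, a < n → b < n → a + r * n = b + s * n → a = b ∧ r = s := by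
    intro a b r s ha hb h
    have h1 : (a + r * n) % n = a := hmodd a r ha
    have h2 : (b + s * n) % n = b := hmodd b s hb
    have hab : a = b := by rw [← h1, ← h2, h]
    subst hab
    have : r * n = s * n := by omega
    exact ⟨rfl, Nat.eq_of_mul_eq_mul_right hn this⟩
  have hturn_le : ∀ a b r s : ℕ, a < n → r ≤ s → (r < s ∨ a ≤ b) → a + r * n ≤ b + s * n := by
    intro a b r s ha hrs h
    rcases h with h | h
    · have h1 : a + r * n < (r + 1) * n := by rw [add_one_mul]; omega
      have h2 : (r + 1) * n ≤ s * n := Nat.mul_le_mul_right n h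
      have h3 : s * n ≤ b + s * n := Nat.le_add_left _ _
      omega
    · have : r * n ≤ s * n := Nat.mul_le_mul_right n hrs
      omega
  -- bundle as image of picks
  have hbundle : ∀ i' : Fin n, rrBundle hn pref goods i' =
      (Finset.range k).image fun r => pk (i'.val + r * n) := by
    intro i'
    ext g
    rw [mem_rrBundle, Finset.mem_image]
    constructor
    · rintro ⟨t, ht, hmod, hsome⟩
      refine ⟨t / n, Finset.mem_range.mpr ?_, ?_⟩
      · exact (Nat.div_lt_iff_lt_mul hn).mpr (hm ▸ ht)
      · have heq : i'.val + (t / n) * n = t := by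
          have h1 := Nat.mod_add_div t n
          have h2 : n * (t / n) = (t / n) * n := Nat.mul_comm _ _
          omega
        rw [heq]
        have := hpick t ht
        rw [hsome] at this
        exact (Option.some.injEq _ _ ▸ this).symm
    · rintro ⟨r, hr, rfl⟩
      rw [Finset.mem_range] at hr
      have htlt := hturn_lt i'.val r i'.isLt hr
      exact ⟨i'.val + r * n, htlt, hmodd i'.val r i'.isLt, hpick _ htlt⟩
  -- picks at distinct turns are distinct
  have hne_pk : ∀ t < goods.card, ∀ t' < goods.card, t ≠ t' → pk t ≠ pk t' := by
    intro t ht t' ht' hne'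
    rcases Nat.lt_or_ge t t' with h | h
    · exact (rrPicked_ne hn pref goods h (hpick t ht) (hpick t' ht')).symm
    · have h' : t' < t := by omega
      exact rrPicked_ne hn pref goods h' (hpick t' ht') (hpick t ht)
  -- optimality of own picks
  have hopt : ∀ t t' : ℕ, t ≤ t' → t' < goods.card → t % n = i.val →
      v i {pk t'} ≤ v i {pk t} := by
    intro t t' htt' ht' hmod
    have ht : t < goods.card := lt_of_le_of_lt (le_of_eq rfl) (lt_of_le_of_lt htt' ht') |>.trans_le le_rfl
    have hmem : pk t' ∈ rrRemaining hn pref goods t :=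
      rrRemaining_antitone hn pref goods htt' (rrPicked_mem hn pref goods (hpick t' ht'))
    have hbest := rrPicked_best hn pref goods v hvalid hcons (hpick t ht) hmem
    have hfin : (⟨t % n, Nat.mod_lt t hn⟩ : Fin n) = i := Fin.ext hmod
    rwa [hfin] at hbest
  have hpk_turn_ne : ∀ a b r s : ℕ, a < n → b < n → r < k → s < k →
      (a ≠ b ∨ r ≠ s) → pk (a + r * n) ≠ pk (b + s * n) := by
    intro a b r s ha hb hr hs hor
    apply hne_pk _ (hturn_lt a r ha hr) _ (hturn_lt b s hb hs)
    intro h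
    obtain ⟨h1, h2⟩ := hturn_key a b r s ha hb h
    tauto
  set f : ℕ → G := fun r => pk (i.val + r * n) with hf_def
  set gj : ℕ → G := fun r => pk (j.val + r * n) with hgj_def
  rcases Nat.lt_or_ge j.val i.val with hji | hij
  · -- j picks before i in each round: drop j's first pick
    have hb0 : gj 0 ∈ rrBundle hn pref goods j := by
      rw [hbundle]
      exact Finset.mem_image.mpr ⟨0, Finset.mem_range.mpr hk, rfl⟩
    refine ⟨gj 0, hb0, ?_⟩
    have hchain := canc_chain (hcanc i) (k' := k - 1) (f := f) (g' := fun r => gj (r + 1))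
      (fun r hr s hsr => hpk_turn_ne i.val i.val s r i.isLt i.isLt (by omega) (by omega)
        (Or.inr (by omega)))
      (fun r hr s hsr => hpk_turn_ne j.val j.val (s + 1) (r + 1) j.isLt j.isLt (by omega)
        (by omega) (Or.inr (by omega)))
      (fun r hr s hsr => hpk_turn_ne i.val j.val s (r + 1) i.isLt j.isLt (by omega) (by omega)
        (Or.inl (by omega)))
      (fun r hr => hopt (i.val + r * n) (j.val + (r + 1) * n)
        (hturn_le i.val j.val r (r + 1) i.isLt (by omega) (Or.inl (by omega)))
        (hturn_lt j.val (r + 1) j.isLt (by omega)) (hmodd i.val r i.isLt))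
      (k - 1) le_rfl
    have hsub : (rrBundle hn pref goods j).erase (gj 0) ⊆
        (Finset.range (k - 1)).image fun r => gj (r + 1) := by
      intro x hx
      obtain ⟨hxne, hxmem⟩ := Finset.mem_erase.mp hx
      rw [hbundle] at hxmem
      obtain ⟨r, hr, rfl⟩ := Finset.mem_image.mp hxmem
      rw [Finset.mem_range] at hr
      have hr0 : r ≠ 0 := by rintro rfl; exact hxne rfl
      refine Finset.mem_image.mpr ⟨r - 1, Finset.mem_range.mpr (by omega), ?_⟩
      congr 1
      omega
    calc v i ((rrBundle hn pref goods j).erase (gj 0))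
        ≤ v i ((Finset.range (k - 1)).image fun r => gj (r + 1)) := hmono i _ _ hsub
      _ ≤ v i ((Finset.range (k - 1)).image f) := hchain
      _ ≤ v i ((Finset.range k).image f) :=
          hmono i _ _ (Finset.image_subset_image (Finset.range_subset_range.mpr (by omega)))
      _ = v i (rrBundle hn pref goods i) := by rw [hbundle]
  · -- i picks no later than j in each round
    refine ⟨g0, hg0, ?_⟩
    have hchain := canc_chain (hcanc i) (k' := k) (f := f) (g' := gj)
      (fun r hr s hsr => hpk_turn_ne i.val i.val s r i.isLt i.isLt (by omega) hr
        (Or.inr (by omega)))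
      (fun r hr s hsr => hpk_turn_ne j.val j.val s r j.isLt j.isLt (by omega) hr
        (Or.inr (by omega)))
      (fun r hr s hsr => hpk_turn_ne i.val j.val s r i.isLt j.isLt (by omega) hr
        (Or.inr (by omega)))
      (fun r hr => hopt (i.val + r * n) (j.val + r * n)
        (hturn_le i.val j.val r r i.isLt le_rfl (Or.inr hij))
        (hturn_lt j.val r j.isLt hr) (hmodd i.val r i.isLt))
      k le_rfl
    calc v i ((rrBundle hn pref goods j).erase g0)
        ≤ v i (rrBundle hn pref goods j) := hmono i _ _ (Finset.erase_subset _ _)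
      _ = v i ((Finset.range k).image gj) := by rw [hbundle]
      _ ≤ v i ((Finset.range k).image f) := hchain
      _ = v i (rrBundle hn pref goods i) := by rw [hbundle]
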